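/- Let A and B be independent N×N real random matrices, and assume B is orthogonally invariant. Then for every k = 1,…,N, the k×k leading principal submatrix of A B Aᵀ has the same distribution as ((AAᵀ)^{[k]})^{1/2} · B^{[k]} · ((AAᵀ)^{[k]})^{1/2}, where x^{[k]} denotes the k×k leading principal submatrix of x and ((AAᵀ)^{[k]})^{1/2} is the positive semidefinite square root of the positive semidefinite matrix (AAᵀ)^{[k]}. -/

import Mathlib

open MeasureTheory ProbabilityTheory Matrix Filter
open scoped ENNReal Topology

noncomputable section

/-- The space of `N × N` real matrices. -/
abbrev Mat (N : ℕ) := Matrix (Fin N) (Fin N) ℝ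

instance (N : ℕ) : MeasurableSpace (Mat N) :=
  inferInstanceAs (MeasurableSpace (Fin N → Fin N → ℝ))

instance (N : ℕ) : BorelSpace (Mat N) :=
  inferInstanceAs (BorelSpace (Fin N → Fin N → ℝ))

open scoped Classical in
/-- The eigenvalues of a matrix (junk value `0` if the matrix is not symmetric). -/
def eigs {N : ℕ} (s : Mat N) : Fin N → ℝ :=
  if h : s.IsHermitian then h.eigenvalues else fun _ => 0

/-- The largest eigenvalue of a symmetric matrix. -/
def lambdaMax {N : ℕ} (s : Mat N) : ℝ := ⨆ i, eigs s i

/-- The eigenvalues of a symmetric matrix in nonincreasing order: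
`eigDesc s k` is the `(k+1)`-th largest eigenvalue `λ_{k+1}(s)`. -/
def eigDesc {N : ℕ} (s : Mat N) (k : Fin N) : ℝ :=
  (eigs s ∘ Tuple.sort (eigs s)) k.rev

open scoped Classical in
/-- The positive semidefinite square root of a positive semidefinite matrix
(junk value `0` otherwise). -/
def msqrt {N : ℕ} (a : Mat N) : Mat N :=
  if h : a.PosSemidef then
    (h.1.eigenvectorUnitary : Mat N) * diagonal (Real.sqrt ∘ h.1.eigenvalues) *
      (star h.1.eigenvectorUnitary : Mat N) else 0

/-- `log⁺ x = max (log x) 0`. -/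
def logPlus (x : ℝ) : ℝ := max (Real.log x) 0

/-- The expectation of a (not necessarily integrable) real random variable, with values in
`[-∞, +∞]`: the difference of the lower integrals of the positive and negative parts. -/
def sInt {Ω : Type*} [MeasurableSpace Ω] (P : Measure Ω) (f : Ω → ℝ) : EReal :=
  ((∫⁻ ω, ENNReal.ofReal (f ω) ∂P : ℝ≥0∞) : EReal) -
    ((∫⁻ ω, ENNReal.ofReal (-f ω) ∂P : ℝ≥0∞) : EReal)

/-- `leftProd A n = A₁ ⋯ A_n` (`0`-indexed: `A 0 * A 1 * ⋯ * A (n-1)`). -/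
def leftProd {Ω : Type*} {N : ℕ} (A : ℕ → Ω → Mat N) : ℕ → Ω → Mat N
  | 0 => fun _ => 1
  | n + 1 => fun ω => leftProd A n ω * A n ω

/-- The top Lyapunov exponent
`γ = inf_{n ≥ 1} (1/n) E[log λ_max(A₁ ⋯ A_n A_nᵀ ⋯ A₁ᵀ)]`, a value in `[-∞, +∞)`. -/
def lyap {Ω : Type*} [MeasurableSpace Ω] {N : ℕ} (P : Measure Ω) (A : ℕ → Ω → Mat N) : EReal :=
  ⨅ n : ℕ, (((1 : ℝ) / (n + 1) : ℝ) : EReal) *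
    sInt P (fun ω => Real.log (lambdaMax (leftProd A (n + 1) ω * (leftProd A (n + 1) ω)ᵀ)))

/-- The `k × k` leading principal submatrix. -/
def subK {N k : ℕ} (hk : k ≤ N) (x : Mat N) : Mat k :=
  x.submatrix (Fin.castLE hk) (Fin.castLE hk)

end

/-!
Condition on `A = a`. The first `k` rows `m` of `a` satisfy `(a B aᵀ)^{[k]} = m B mᵀ` and
`m mᵀ = (aaᵀ)^{[k]} = S²` with `S = ((aaᵀ)^{[k]})^{1/2}`. So `m` and `S E`, where `E = [I_k 0]`,
have the same Gram matrix and differ by an orthogonal `u`: `m u = S E`. Hence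
`m (u B uᵀ) mᵀ = S B^{[k]} S`, and `u B uᵀ` has the law of `B`, independently of `A`.
-/

theorem LinearMap.exists_linearIsometry_comp_eq {𝕜 E F : Type*} [RCLike 𝕜] [AddCommGroup E]
    [Module 𝕜 E] [NormedAddCommGroup F] [InnerProductSpace 𝕜 F] [FiniteDimensional 𝕜 F]
    (T₀ T₁ : E →ₗ[𝕜] F) (h : ∀ x, ‖T₀ x‖ = ‖T₁ x‖) :
    ∃ L : F →ₗᵢ[𝕜] F, ∀ x, L (T₀ x) = T₁ x := by
  have hker : LinearMap.ker T₀ ≤ LinearMap.ker T₁ := fun x hx => by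
    rw [LinearMap.mem_ker, ← norm_eq_zero, ← h, norm_eq_zero]; exact hx
  let L₀ : LinearMap.range T₀ →ₗ[𝕜] F :=
    (LinearMap.ker T₀).liftQ T₁ hker ∘ₗ T₀.quotKerEquivRange.symm.toLinearMap
  have hL₀ : ∀ x, L₀ ⟨T₀ x, LinearMap.mem_range_self T₀ x⟩ = T₁ x := fun x => by
    simp [L₀, LinearMap.quotKerEquivRange_symm_apply_image]
  let L : LinearMap.range T₀ →ₗᵢ[𝕜] F :=
    { toLinearMap := L₀
      norm_map' := by
        rintro ⟨_, x, rfl⟩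
        rw [hL₀, ← h]; rfl }
  exact ⟨L.extend, fun x => (L.extend_apply ⟨T₀ x, _⟩).trans (hL₀ x)⟩

theorem Matrix.norm_sq_toLp_transpose_mulVec {m n : Type*} [Fintype m] [Fintype n]
    (X : Matrix m n ℝ) (c : m → ℝ) :
    ‖WithLp.toLp 2 (Xᵀ *ᵥ c)‖ ^ 2 = c ⬝ᵥ (X * Xᵀ) *ᵥ c := by
  rw [EuclideanSpace.norm_sq_eq, ← mulVec_mulVec, dotProduct_mulVec, ← mulVec_transpose]
  simp [dotProduct, sq]

theorem Matrix.exists_orthogonal_mul_eq_of_mul_transpose_eq {m n : Type*} [Fintype m] [Fintype n]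
    [DecidableEq n] {X Y : Matrix m n ℝ} (h : X * Xᵀ = Y * Yᵀ) :
    ∃ u : Matrix n n ℝ, u * uᵀ = 1 ∧ X * u = Y := by
  classical
  -- `‖Xᵀ c‖ = ‖Yᵀ c‖`, so an isometry of `ℝⁿ` carries `Xᵀ c` to `Yᵀ c`; its matrix is `uᵀ`.
  let T (Z : Matrix m n ℝ) : (m → ℝ) →ₗ[ℝ] EuclideanSpace ℝ n :=
    (WithLp.linearEquiv 2 ℝ (n → ℝ)).symm.toLinearMap ∘ₗ Zᵀ.mulVecLin
  obtain ⟨L, hL⟩ := LinearMap.exists_linearIsometry_comp_eq (T X) (T Y) fun c => by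
    rw [← sq_eq_sq₀ (norm_nonneg _) (norm_nonneg _)]
    exact (norm_sq_toLp_transpose_mulVec X c).trans
      (h ▸ (norm_sq_toLp_transpose_mulVec Y c).symm)
  let b := EuclideanSpace.basisFun n ℝ
  let v : Matrix n n ℝ := LinearMap.toMatrix b.toBasis b.toBasis L.toLinearMap
  have hv : ∀ x, v *ᵥ x = (L (WithLp.toLp 2 x)).ofLp := fun x =>
    congrArg WithLp.ofLp (LinearMap.congr_fun (toLin_toMatrix b.toBasis b.toBasis L.toLinearMap) _)
  have hvo : v ∈ unitaryGroup n ℝ := (L.toLinearIsometryEquiv rfl).toMatrix_mem_unitaryGroup b b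
  refine ⟨vᵀ, ?_, ?_⟩
  · rw [transpose_transpose]
    simpa [mem_unitaryGroup_iff', star_eq_conjTranspose] using hvo
  · rw [← transpose_transpose Y, ← transpose_transpose X, ← transpose_mul]
    congr 1
    refine ext_of_mulVec_single fun i => ?_
    rw [← mulVec_mulVec, hv]
    exact congrArg WithLp.ofLp (hL _)

theorem msqrt_eq_cfc {n : ℕ} {a : Mat n} (ha : a.PosSemidef) : msqrt a = cfc Real.sqrt a := by
  rw [msqrt, dif_pos ha, ha.1.cfc_eq, IsHermitian.cfc, Unitary.conjStarAlgAut_apply]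
  rfl

theorem transpose_msqrt {n : ℕ} (a : Mat n) : (msqrt a)ᵀ = msqrt a := by
  by_cases ha : a.PosSemidef
  · rw [msqrt_eq_cfc ha, ← conjTranspose_eq_transpose_of_trivial]
    exact (cfc_predicate Real.sqrt a : IsSelfAdjoint _)
  · simp [msqrt, ha]

theorem msqrt_mul_self {n : ℕ} {a : Mat n} (ha : a.PosSemidef) : msqrt a * msqrt a = a := by
  have hspec := (posSemidef_iff_isHermitian_and_spectrum_nonneg.mp ha).2
  rw [msqrt_eq_cfc ha, ← cfc_mul Real.sqrt Real.sqrt a]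
  conv_rhs => rw [← cfc_id' ℝ a ha.1.isSelfAdjoint]
  exact cfc_congr fun x hx => Real.mul_self_sqrt (hspec hx)

-- The continuity of `cfc` in the matrix needs a C⋆-norm; the L2 operator norm induces the
-- product topology.
open scoped Norms.L2Operator in
theorem Continuous.msqrt {X : Type*} [TopologicalSpace X] {n : ℕ} {f : X → Mat n}
    (hf : Continuous f) (hpsd : ∀ x, (f x).PosSemidef) : Continuous fun x => msqrt (f x) := by
  simp_rw [msqrt_eq_cfc (hpsd _)]
  exact hf.cfc_of_mem_nhdsSet Real.sqrt Filter.univ_mem (fun x => (hpsd x).1)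

theorem exists_orthogonal_mul_eq_msqrt_mul {k : ℕ} {n : Type*} [Fintype n] [DecidableEq n]
    (X E : Matrix (Fin k) n ℝ) (hE : E * Eᵀ = 1) :
    ∃ u : Matrix n n ℝ, u * uᵀ = 1 ∧ X * u = msqrt (X * Xᵀ) * E := by
  have hXX : (X * Xᵀ).PosSemidef := by
    simpa using posSemidef_self_mul_conjTranspose X
  refine exists_orthogonal_mul_eq_of_mul_transpose_eq ?_
  rw [transpose_mul, transpose_msqrt, Matrix.mul_assoc, ← Matrix.mul_assoc E, hE,
    Matrix.one_mul, msqrt_mul_self hXX]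

-- Makes the Borel σ-algebra of `Mat n × Mat n` the product one.
instance {n : ℕ} : SecondCountableTopology (Mat n) :=
  inferInstanceAs (SecondCountableTopology (Fin n → Fin n → ℝ))

@[fun_prop]
theorem continuous_subK {N k : ℕ} (hk : k ≤ N) : Continuous (subK hk) :=
  continuous_id.matrix_submatrix _ _

theorem subK_mul_mul_transpose {N k : ℕ} (hk : k ≤ N) (a b : Mat N) :
    subK hk (a * b * aᵀ)
      = a.submatrix (Fin.castLE hk) id * b * (a.submatrix (Fin.castLE hk) id)ᵀ := by
  rw [subK, submatrix_mul _ _ _ id _ Function.bijective_id,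
    submatrix_mul _ _ _ id _ Function.bijective_id, transpose_submatrix]
  rfl

theorem exists_orthogonal_subK_conj_eq {N k : ℕ} (hk : k ≤ N) (a : Mat N) :
    ∃ u : Mat N, u * uᵀ = 1 ∧ ∀ b : Mat N, subK hk (a * (u * b * uᵀ) * aᵀ)
      = msqrt (subK hk (a * aᵀ)) * subK hk b * msqrt (subK hk (a * aᵀ)) := by
  let r (x : Mat N) : Matrix (Fin k) (Fin N) ℝ := x.submatrix (Fin.castLE hk) id
  have hr : ∀ x b, subK hk (x * b * xᵀ) = r x * b * (r x)ᵀ := subK_mul_mul_transpose hk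
  have hE : r 1 * (r 1)ᵀ = 1 := by
    simpa [subK, submatrix_one _ (Fin.castLE_injective hk)] using (hr 1 1).symm
  obtain ⟨u, hu, hau⟩ := exists_orthogonal_mul_eq_msqrt_mul (r a) (r 1) hE
  refine ⟨u, hu, fun b => ?_⟩
  have haa : subK hk (a * aᵀ) = r a * (r a)ᵀ := by simpa using hr a 1
  calc subK hk (a * (u * b * uᵀ) * aᵀ) = (r a * u) * b * (r a * u)ᵀ := by
        rw [hr]; simp only [transpose_mul, Matrix.mul_assoc]
    _ = msqrt (r a * (r a)ᵀ) * (r 1 * b * (r 1)ᵀ) * msqrt (r a * (r a)ᵀ) := by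
        rw [hau, transpose_mul, transpose_msqrt]; simp only [Matrix.mul_assoc]
    _ = _ := by rw [← hr, haa]; simp

theorem MeasureTheory.Measure.map_prod_eq_of_forall_map_eq {α β γ : Type*} [MeasurableSpace α]
    [MeasurableSpace β] [MeasurableSpace γ] {μ : Measure α} {ν : Measure β} [SFinite ν]
    {F G : α → β → γ} (hF : Measurable (Function.uncurry F))
    (hG : Measurable (Function.uncurry G)) (h : ∀ a, ν.map (F a) = ν.map (G a)) :
    (μ.prod ν).map (Function.uncurry F) = (μ.prod ν).map (Function.uncurry G) := by
  ext s hs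
  rw [map_apply hF hs, map_apply hG hs, prod_apply (hF hs), prod_apply (hG hs)]
  refine lintegral_congr fun a => ?_
  have hFa : Measurable (F a) := hF.comp measurable_prodMk_left
  have hGa : Measurable (G a) := hG.comp measurable_prodMk_left
  exact (map_apply hFa hs).symm.trans ((congrArg (· s) (h a)).trans (map_apply hGa hs))

theorem ProbabilityTheory.IndepFun.map_eq_map_of_forall_map_eq {Ω α β γ : Type*}
    [MeasurableSpace Ω] [MeasurableSpace α] [MeasurableSpace β] [MeasurableSpace γ]
    {P : Measure Ω} [IsFiniteMeasure P] {A : Ω → α} {B : Ω → β} (hind : IndepFun A B P)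
    (hA : Measurable A) (hB : Measurable B) {F G : α → β → γ}
    (hF : Measurable (Function.uncurry F)) (hG : Measurable (Function.uncurry G))
    (h : ∀ a, (P.map B).map (F a) = (P.map B).map (G a)) :
    P.map (fun ω => F (A ω) (B ω)) = P.map (fun ω => G (A ω) (B ω)) := by
  have hjoint := (indepFun_iff_map_prod_eq_prod_map_map hA.aemeasurable hB.aemeasurable).mp hind
  have hAB : Measurable fun ω => (A ω, B ω) := hA.prodMk hB
  calc P.map (fun ω => F (A ω) (B ω)) = (P.map fun ω => (A ω, B ω)).map (Function.uncurry F) :=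
        (Measure.map_map hF hAB).symm
    _ = (P.map fun ω => (A ω, B ω)).map (Function.uncurry G) := by
        rw [hjoint, Measure.map_prod_eq_of_forall_map_eq hF hG h]
    _ = P.map (fun ω => G (A ω) (B ω)) := Measure.map_map hG hAB

theorem principal_submatrix_mult_convolution_general
    {N k : ℕ} (hk : k ≤ N)
    {Ω : Type*} [MeasurableSpace Ω] (P : Measure Ω) [IsProbabilityMeasure P]
    (A B : Ω → Mat N) (hA : Measurable A) (hB : Measurable B)
    (hindep : IndepFun A B P)
    (hBinv : ∀ u : Mat N, u * uᵀ = 1 →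
      Measure.map (fun ω => u * B ω * uᵀ) P = Measure.map B P) :
    Measure.map (fun ω => subK hk (A ω * B ω * (A ω)ᵀ)) P
      = Measure.map (fun ω =>
          msqrt (subK hk (A ω * (A ω)ᵀ)) * subK hk (B ω) * msqrt (subK hk (A ω * (A ω)ᵀ))) P := by
  let S (a : Mat N) : Mat k := msqrt (subK hk (a * aᵀ))
  have hS : Continuous S :=
    Continuous.msqrt (by fun_prop) fun a => (posSemidef_self_mul_conjTranspose a).submatrix _
  refine hindep.map_eq_map_of_forall_map_eq hA hB (F := fun a b => subK hk (a * b * aᵀ))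
    (G := fun a b => S a * subK hk b * S a) (by fun_prop : Continuous _).measurable
    (by fun_prop : Continuous _).measurable fun a => ?_
  obtain ⟨u, hu, hconj⟩ := exists_orthogonal_subK_conj_eq hk a
  have hconj_meas : Measurable fun b : Mat N => u * b * uᵀ :=
    (by fun_prop : Continuous _).measurable
  have hinv : (P.map B).map (fun b => u * b * uᵀ) = P.map B := by
    rw [Measure.map_map hconj_meas hB]; exact hBinv u hu
  calc (P.map B).map (fun b => subK hk (a * b * aᵀ))
      = ((P.map B).map fun b => u * b * uᵀ).map (fun b => subK hk (a * b * aᵀ)) := by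
        rw [hinv]
    _ = _ := by
        rw [Measure.map_map (by fun_prop : Continuous _).measurable hconj_meas]
        exact congrArg (Measure.map · (P.map B)) (funext hconj)

/-- If `A` and `B` are independent and `B` is orthogonally invariant, then
for every `1 ≤ k ≤ N`, the `k × k` leading principal submatrix `(A B Aᵀ)^{[k]}` has the same
distribution as `((AAᵀ)^{[k]})^{1/2} B^{[k]} ((AAᵀ)^{[k]})^{1/2}`. -/
theorem principal_submatrix_mult_convolution
    {N k : ℕ} (hk1 : 1 ≤ k) (hk : k ≤ N)
    {Ω : Type*} [MeasurableSpace Ω] (P : Measure Ω) [IsProbabilityMeasure P]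
    (A B : Ω → Mat N) (hA : Measurable A) (hB : Measurable B)
    (hindep : IndepFun A B P)
    (hBinv : ∀ u : Mat N, u * uᵀ = 1 →
      Measure.map (fun ω => u * B ω * uᵀ) P = Measure.map B P) :
    Measure.map (fun ω => subK hk (A ω * B ω * (A ω)ᵀ)) P
      = Measure.map (fun ω =>
          msqrt (subK hk (A ω * (A ω)ᵀ)) * subK hk (B ω) * msqrt (subK hk (A ω * (A ω)ᵀ))) P :=
  principal_submatrix_mult_convolution_general hk P A B hA hB hindep hBinv
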